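/- Let w be one of (−1,1)ᵀ, (1,−2,1)ᵀ, (−1,1,1,−1)ᵀ with length d, let λ > 0, let A ⊆ {1,…,d} be nonempty with |A| = t, and let f = (f^{(1)},…,f^{(d)}) ∈ 𝒳^d. For x^a = (x^{(j)})_{j∈A} ∈ 𝒳^t let x denote the matrix with columns x^{(j)} for j ∈ A and fixed columns f^{(j)} for j ∉ A, and consider ℰ(x^a) = ½ Σ_{j∈A} d_𝒳(x^{(j)},f^{(j)})² + λ D(x;w). Assume the generic condition that (f_S w)_i ∉ 2πℤ − π for every cyclic component i = 1,…,m. Then ℰ has the unique minimizer x̂^a = (f^a − m s (w^a)ᵀ)_𝒳, where w^a = (w_j)_{j∈A}, the vector (fw)_𝒳 ∈ ℝ^{m+n} has components ((f_S w)_i)_{2π} for i ≤ m and (f_ℝ w)_{i−m} for i > m, s = (fw)_𝒳/‖(fw)_𝒳‖ if (fw)_𝒳 ≠ 0 and s = 0 otherwise, and m = min{λ, ‖(fw)_𝒳‖/‖w^a‖²}. -/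

import Mathlib

open scoped Classical

noncomputable section

/-- `(t)_{2π}`: the unique element of `[-π, π)` with `t - (t)_{2π} ∈ 2πℤ`. -/
def wrap (t : ℝ) : ℝ := t - 2 * Real.pi * (⌊(t + Real.pi) / (2 * Real.pi)⌋ : ℤ)

/-- A point of `𝒳 = (𝕊¹)^m × ℝⁿ`, identified with `[-π,π)^m × ℝⁿ`. -/
abbrev Pt (m n : ℕ) := (Fin m → ℝ) × (Fin n → ℝ)

/-- Distance on `𝒳`. -/
def dX {m n : ℕ} (x y : Pt m n) : ℝ :=
  Real.sqrt ((∑ i, (wrap (x.1 i - y.1 i)) ^ 2) + ∑ i, (x.2 i - y.2 i) ^ 2)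

/-- Combined absolute finite difference of `x ∈ 𝒳^d` with respect to the weight `w`. -/
def Dw {m n : ℕ} (d : ℕ) (w : Fin d → ℝ) (x : Fin d → Pt m n) : ℝ :=
  Real.sqrt
    ((sInf {r : ℝ | ∃ k : Fin m → Fin d → ℤ,
        r = ∑ i, (∑ j, ((x j).1 i + 2 * Real.pi * (k i j : ℝ)) * w j) ^ 2}) +
      ∑ i, (∑ j, (x j).2 i * w j) ^ 2)

/-!
Write `γ = (fw)_𝒳` and, for the active columns, `zⱼ = (x^{(j)} - f^{(j)})_𝒳` viewed in `ℝ^{m+n}`.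
Since `w` is integral with an entry `±1`, the infimum over `k` in `D` is the wrap of `xw`, and
`xw ≡ γ + ∑ⱼ wⱼ zⱼ` modulo the lattice `(2πℤ)^m × {0}`. Hence
`ℰ = ½ ∑ ‖zⱼ‖² + λ ‖γ + ℓ + ∑ wⱼ zⱼ‖` for some lattice vector `ℓ`. For fixed `ℓ` this is a
strongly convex problem in a Euclidean space with minimum value
`V(‖γ + ℓ‖) = m ‖γ + ℓ‖ - m² ‖w^a‖² / 2`, attained at `zⱼ = -m wⱼ (γ + ℓ) / ‖γ + ℓ‖`.
The generic condition puts `γ` strictly inside `(-π, π)^m`, so `‖γ + ℓ‖ > ‖γ‖` for `ℓ ≠ 0`,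
and `V` is strictly increasing: the global minimum is at `ℓ = 0`, and it is `x̂`.
-/

open Real

lemma wrap_eq_toIcoMod (t : ℝ) : wrap t = toIcoMod two_pi_pos (-π) t := by
  rw [toIcoMod, toIcoDiv_eq_floor, zsmul_eq_mul, sub_neg_eq_add, wrap]
  ring

lemma wrap_mem_Ico (t : ℝ) : wrap t ∈ Set.Ico (-π) π := by
  have h := toIcoMod_mem_Ico two_pi_pos (-π) t
  rwa [← wrap_eq_toIcoMod, neg_add_eq_sub, two_mul, add_sub_cancel_right] at h

lemma wrap_eq_self {t : ℝ} (h : t ∈ Set.Ico (-π) π) : wrap t = t := by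
  rwa [wrap_eq_toIcoMod, toIcoMod_eq_self, neg_add_eq_sub, two_mul, add_sub_cancel_right]

lemma wrap_sub_self_mem (t : ℝ) : wrap t - t ∈ AddSubgroup.zmultiples (2 * π) := by
  rw [wrap_eq_toIcoMod, toIcoMod_sub_self]
  exact AddSubgroup.zsmul_mem_zmultiples _ _

lemma wrap_eq_of_sub_mem {s t : ℝ} (h : s - t ∈ AddSubgroup.zmultiples (2 * π)) :
    wrap s = wrap t := by
  obtain ⟨k, hk⟩ := AddSubgroup.mem_zmultiples_iff.1 h
  rw [wrap_eq_toIcoMod, wrap_eq_toIcoMod, toIcoMod_eq_toIcoMod]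
  exact ⟨-k, by rw [neg_smul, hk, neg_sub]⟩

lemma abs_wrap_lt {t : ℝ} (h : ∀ k : ℤ, t ≠ 2 * π * k - π) : |wrap t| < π := by
  obtain ⟨hlo, hhi⟩ := wrap_mem_Ico t
  refine abs_lt.2 ⟨hlo.lt_of_ne fun heq => ?_, hhi⟩
  obtain ⟨k, hk⟩ := AddSubgroup.mem_zmultiples_iff.1 (wrap_sub_self_mem t)
  exact h (-k) (by rw [zsmul_eq_mul] at hk; push_cast; linarith)

/-- `(a + 2πk)² - a² = 4πk (a + πk)`, and `a + πk` has the sign of `k` for `a ∈ [-π, π)`. -/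
lemma sq_le_sq_add_zsmul {a : ℝ} (ha : a ∈ Set.Ico (-π) π) (k : ℤ) :
    a ^ 2 ≤ (a + k • (2 * π)) ^ 2 := by
  have hπ := pi_pos
  rw [zsmul_eq_mul]
  have key : 0 ≤ (k : ℝ) * (a + π * k) := by
    rcases lt_trichotomy k 0 with hk | rfl | hk
    · have : (k : ℝ) ≤ -1 := by exact_mod_cast Int.le_sub_one_of_lt hk
      exact mul_nonneg_of_nonpos_of_nonpos (by linarith) (by nlinarith [ha.2])
    · simp
    · have : (1 : ℝ) ≤ k := by exact_mod_cast hk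
      exact mul_nonneg (by linarith) (by nlinarith [ha.1])
  nlinarith [mul_nonneg hπ.le key]

lemma sq_lt_sq_add_zsmul {a : ℝ} (ha : |a| < π) {k : ℤ} (hk : k ≠ 0) :
    a ^ 2 < (a + k • (2 * π)) ^ 2 := by
  have hπ := pi_pos
  obtain ⟨hlo, hhi⟩ := abs_lt.1 ha
  rw [zsmul_eq_mul]
  have key : 0 < (k : ℝ) * (a + π * k) := by
    rcases hk.lt_or_gt with hk | hk
    · have : (k : ℝ) ≤ -1 := by exact_mod_cast Int.le_sub_one_of_lt hk
      exact mul_pos_of_neg_of_neg (by linarith) (by nlinarith)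
    · have : (1 : ℝ) ≤ k := by exact_mod_cast hk
      exact mul_pos (by linarith) (by nlinarith)
  nlinarith [mul_pos hπ key]

lemma sq_wrap_le_sq_add_zsmul (t : ℝ) (k : ℤ) : wrap t ^ 2 ≤ (t + k • (2 * π)) ^ 2 := by
  obtain ⟨q, hq⟩ := AddSubgroup.mem_zmultiples_iff.1 (wrap_sub_self_mem t)
  have : t + k • (2 * π) = wrap t + (k - q) • (2 * π) := by rw [sub_smul, hq]; ring
  rw [this]
  exact sq_le_sq_add_zsmul (wrap_mem_Ico t) _

lemma abs_le_sq_of_exists_int {a : ℝ} (ha : ∃ z : ℤ, (z : ℝ) = a) : |a| ≤ a ^ 2 := by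
  obtain ⟨z, rfl⟩ := ha
  rw [← Int.cast_abs, Int.abs_eq_natAbs]
  exact_mod_cast Int.natAbs_le_self_sq z

/-- For integer weights whose integer span contains `1`, the shifts `2πk` of the columns move
`∑ⱼ aᵢⱼ wⱼ` through exactly the coset `∑ⱼ aᵢⱼ wⱼ + 2πℤ`, whose least square is that of its wrap. -/
lemma sInf_sum_sq_eq_sum_sq_wrap {m d : ℕ} {w : Fin d → ℝ}
    (hwint : ∀ j, ∃ z : ℤ, (z : ℝ) = w j) (hunit : ∃ c : Fin d → ℤ, ∑ j, (c j : ℝ) * w j = 1)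
    (a : Fin m → Fin d → ℝ) :
    sInf {r : ℝ | ∃ k : Fin m → Fin d → ℤ,
        r = ∑ i, (∑ j, (a i j + 2 * π * (k i j : ℝ)) * w j) ^ 2}
      = ∑ i, wrap (∑ j, a i j * w j) ^ 2 := by
  have hexpand (k : Fin m → Fin d → ℤ) (i : Fin m) :
      ∑ j, (a i j + 2 * π * (k i j : ℝ)) * w j
        = ∑ j, a i j * w j + (∑ j, (k i j : ℝ) * w j) * (2 * π) := by
    rw [Finset.sum_mul, ← Finset.sum_add_distrib]
    exact Finset.sum_congr rfl fun j _ => by ring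
  choose ζ hζ using hwint
  obtain ⟨c, hc⟩ := hunit
  refine IsLeast.csInf_eq ⟨?_, ?_⟩
  · choose q hq using fun i =>
      AddSubgroup.mem_zmultiples_iff.1 (wrap_sub_self_mem (∑ j, a i j * w j))
    refine ⟨fun i j => q i * c j, Finset.sum_congr rfl fun i _ => ?_⟩
    have hqc : ∑ j, ((q i * c j : ℤ) : ℝ) * w j = q i := by
      simp_rw [Int.cast_mul, mul_assoc, ← Finset.mul_sum, hc, mul_one]
    rw [hexpand (fun i j => q i * c j), hqc, ← zsmul_eq_mul, hq]
    ring
  · rintro r ⟨k, rfl⟩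
    refine Finset.sum_le_sum fun i _ => ?_
    have hint : ∑ j, (k i j : ℝ) * w j = ((∑ j, k i j * ζ j : ℤ) : ℝ) := by
      push_cast
      exact Finset.sum_congr rfl fun j _ => by rw [hζ]
    rw [hexpand, hint, ← zsmul_eq_mul]
    exact sq_wrap_le_sq_add_zsmul _ _

section Points

variable {m n d : ℕ}

/-- Two representatives in `Pt m n` of the same point of `𝒳` differ by an element of
`(2πℤ)^m × {0}`. -/
def cycLattice (m n : ℕ) : AddSubgroup (Pt m n) :=
  (AddSubgroup.pi Set.univ fun _ => AddSubgroup.zmultiples (2 * π)).prod ⊥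

/-- The paper's `(p)_𝒳`. -/
def wrapPt (p : Pt m n) : Pt m n := (fun i => wrap (p.1 i), p.2)

/-- The paper's `(fw)_𝒳`. -/
def wrappedDiff (w : Fin d → ℝ) (f : Fin d → Pt m n) : Pt m n := wrapPt (∑ j, w j • f j)

lemma mem_cycLattice {ℓ : Pt m n} :
    ℓ ∈ cycLattice m n ↔ (∀ i, ℓ.1 i ∈ AddSubgroup.zmultiples (2 * π)) ∧ ℓ.2 = 0 := by
  simp [cycLattice, AddSubgroup.mem_prod, AddSubgroup.mem_pi]

lemma smul_mem_cycLattice {a : ℝ} (ha : ∃ z : ℤ, (z : ℝ) = a) {ℓ : Pt m n}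
    (hℓ : ℓ ∈ cycLattice m n) : a • ℓ ∈ cycLattice m n := by
  obtain ⟨z, rfl⟩ := ha
  rw [Int.cast_smul_eq_zsmul]
  exact zsmul_mem hℓ z

lemma wrapPt_sub_self_mem (p : Pt m n) : wrapPt p - p ∈ cycLattice m n :=
  mem_cycLattice.2 ⟨fun i => wrap_sub_self_mem (p.1 i), sub_self _⟩

lemma wrapPt_eq_of_sub_mem {p q : Pt m n} (h : p - q ∈ cycLattice m n) :
    wrapPt p = wrapPt q := by
  obtain ⟨h1, h2⟩ := mem_cycLattice.1 h
  exact Prod.ext (funext fun i => wrap_eq_of_sub_mem (h1 i)) (sub_eq_zero.1 h2)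

lemma wrapPt_eq_self {p : Pt m n} (h : ∀ i, p.1 i ∈ Set.Ico (-π) π) : wrapPt p = p :=
  Prod.ext (funext fun i => wrap_eq_self (h i)) rfl

lemma wrapPt_wrapPt_add_sub {p q : Pt m n} (hq : ∀ i, |q.1 i| < π) :
    wrapPt (wrapPt (p + q) - p) = q := by
  rw [wrapPt_eq_of_sub_mem (q := q) (by rw [sub_sub]; exact wrapPt_sub_self_mem (p + q))]
  exact wrapPt_eq_self fun i => ⟨(abs_lt.1 (hq i)).1.le, (abs_lt.1 (hq i)).2⟩

lemma eq_of_wrapPt_sub_eq {p q r : Pt m n} (hp : ∀ i, p.1 i ∈ Set.Ico (-π) π)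
    (hq : ∀ i, q.1 i ∈ Set.Ico (-π) π) (h : wrapPt (p - r) = wrapPt (q - r)) : p = q := by
  rw [← wrapPt_eq_self hp, ← wrapPt_eq_self hq]
  apply wrapPt_eq_of_sub_mem
  have : p - q = (wrapPt (q - r) - (q - r)) - (wrapPt (p - r) - (p - r)) := by rw [h]; abel
  rw [this]
  exact sub_mem (wrapPt_sub_self_mem _) (wrapPt_sub_self_mem _)

lemma wrappedDiff_fst_apply (w : Fin d → ℝ) (x : Fin d → Pt m n) (i : Fin m) :
    (wrappedDiff w x).1 i = wrap (∑ j, (x j).1 i * w j) := by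
  simp [wrappedDiff, wrapPt, Prod.fst_sum, Finset.sum_apply, mul_comm]

lemma wrappedDiff_snd_apply (w : Fin d → ℝ) (x : Fin d → Pt m n) (i : Fin n) :
    (wrappedDiff w x).2 i = ∑ j, (x j).2 i * w j := by
  simp [wrappedDiff, wrapPt, Prod.snd_sum, Finset.sum_apply, mul_comm]

/-- `Pt m n` with the Euclidean norm of `ℝ^{m+n}`, in which `d_𝒳(x, y) = ‖(x - y)_𝒳‖`. -/
def ptEquivEuclidean : Pt m n ≃ₗ[ℝ] EuclideanSpace ℝ (Fin m ⊕ Fin n) :=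
  (LinearEquiv.sumArrowLequivProdArrow _ _ ℝ ℝ).symm ≪≫ₗ (WithLp.linearEquiv 2 ℝ _).symm

lemma norm_ptEquivEuclidean_sq (p : Pt m n) :
    ‖ptEquivEuclidean p‖ ^ 2 = ∑ i, p.1 i ^ 2 + ∑ i, p.2 i ^ 2 := by
  simp only [EuclideanSpace.real_norm_sq_eq, Fintype.sum_sum_type]
  rfl

lemma norm_ptEquivEuclidean (p : Pt m n) :
    ‖ptEquivEuclidean p‖ = √(∑ i, p.1 i ^ 2 + ∑ i, p.2 i ^ 2) := by
  rw [← norm_ptEquivEuclidean_sq, Real.sqrt_sq (norm_nonneg _)]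

lemma dX_eq_norm_wrapPt (x y : Pt m n) : dX x y = ‖ptEquivEuclidean (wrapPt (x - y))‖ := by
  rw [norm_ptEquivEuclidean]
  rfl

lemma norm_ptEquivEuclidean_wrapPt_le (p : Pt m n) :
    ‖ptEquivEuclidean (wrapPt p)‖ ≤ ‖ptEquivEuclidean p‖ := by
  refine (sq_le_sq₀ (norm_nonneg _) (norm_nonneg _)).1 ?_
  rw [norm_ptEquivEuclidean_sq, norm_ptEquivEuclidean_sq]
  have h (i : Fin m) : wrap (p.1 i) ^ 2 ≤ p.1 i ^ 2 := by
    simpa using sq_wrap_le_sq_add_zsmul (p.1 i) 0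
  exact add_le_add_left (Finset.sum_le_sum fun i _ => h i) _

lemma norm_ptEquivEuclidean_lt_add {p ℓ : Pt m n} (hp : ∀ i, |p.1 i| < π)
    (hℓ : ℓ ∈ cycLattice m n) (hℓ0 : ℓ ≠ 0) :
    ‖ptEquivEuclidean p‖ < ‖ptEquivEuclidean (p + ℓ)‖ := by
  obtain ⟨hℓ1, hℓ2⟩ := mem_cycLattice.1 hℓ
  choose k hk using fun i => AddSubgroup.mem_zmultiples_iff.1 (hℓ1 i)
  obtain ⟨i₀, hi₀⟩ : ∃ i, k i ≠ 0 := by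
    by_contra! h
    exact hℓ0 (Prod.ext (funext fun i => by simp [← hk i, h i]) hℓ2)
  refine (sq_lt_sq₀ (norm_nonneg _) (norm_nonneg _)).1 ?_
  rw [norm_ptEquivEuclidean_sq, norm_ptEquivEuclidean_sq, Prod.snd_add, hℓ2, add_zero]
  refine add_lt_add_left (Finset.sum_lt_sum (fun i _ => ?_) ⟨i₀, Finset.mem_univ _, ?_⟩) _
  · rw [Prod.fst_add, Pi.add_apply, ← hk i]
    exact sq_le_sq_add_zsmul ⟨(abs_lt.1 (hp i)).1.le, (abs_lt.1 (hp i)).2⟩ _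
  · rw [Prod.fst_add, Pi.add_apply, ← hk i₀]
    exact sq_lt_sq_add_zsmul (hp i₀) hi₀

variable {w : Fin d → ℝ}

lemma Dw_eq_norm_wrapPt (hwint : ∀ j, ∃ z : ℤ, (z : ℝ) = w j)
    (hunit : ∃ c : Fin d → ℤ, ∑ j, (c j : ℝ) * w j = 1) (x : Fin d → Pt m n) :
    Dw d w x = ‖ptEquivEuclidean (wrappedDiff w x)‖ := by
  rw [Dw, sInf_sum_sq_eq_sum_sq_wrap hwint hunit fun i j => (x j).1 i, norm_ptEquivEuclidean]
  simp only [wrappedDiff_fst_apply, wrappedDiff_snd_apply]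

/-- As `w` is integral, `xw ≡ (fw)_𝒳 + ∑_{j ∈ A} wⱼ (x^{(j)} - f^{(j)})_𝒳` modulo the lattice. -/
lemma Dw_eq_norm_wrapPt_add (hwint : ∀ j, ∃ z : ℤ, (z : ℝ) = w j)
    (hunit : ∃ c : Fin d → ℤ, ∑ j, (c j : ℝ) * w j = 1) {A : Finset (Fin d)}
    {f x : Fin d → Pt m n} (hx : ∀ j ∉ A, x j = f j) :
    Dw d w x = ‖ptEquivEuclidean
      (wrapPt (wrappedDiff w f + ∑ j ∈ A, w j • wrapPt (x j - f j)))‖ := by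
  rw [Dw_eq_norm_wrapPt hwint hunit, wrappedDiff]
  congr 2
  apply wrapPt_eq_of_sub_mem
  have hsplit : ∑ j, w j • x j = ∑ j, w j • f j + ∑ j ∈ A, w j • (x j - f j) := by
    rw [Finset.sum_subset (Finset.subset_univ A) fun j _ hj => by rw [hx j hj, sub_self, smul_zero],
      ← Finset.sum_add_distrib]
    simp_rw [smul_sub, add_sub_cancel]
  have hdiff : ∑ j, w j • x j - (wrappedDiff w f + ∑ j ∈ A, w j • wrapPt (x j - f j))
      = -(wrappedDiff w f - ∑ j, w j • f j)
        - ∑ j ∈ A, w j • (wrapPt (x j - f j) - (x j - f j)) := by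
    rw [hsplit]
    simp_rw [smul_sub, Finset.sum_sub_distrib]
    abel
  rw [hdiff]
  exact sub_mem (neg_mem (wrapPt_sub_self_mem _)) (sum_mem fun j _ =>
    smul_mem_cycLattice (hwint j) (wrapPt_sub_self_mem _))

end Points

section Prox

variable {E ι : Type*} [NormedAddCommGroup E] [InnerProductSpace ℝ E]

/-- The step length `m = min {λ, N / W}` of the paper, with `N = ‖(fw)_𝒳‖` and `W = ‖w^a‖²`. -/
def proxStep (lam W N : ℝ) : ℝ := min lam (N / W)

def proxValue (lam W N : ℝ) : ℝ := proxStep lam W N * N - proxStep lam W N ^ 2 * W / 2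

variable (A : Finset ι) (w : ι → ℝ) (lam : ℝ)

def proxEnergy (γ : E) (z : ι → E) : ℝ :=
  1 / 2 * ∑ j ∈ A, ‖z j‖ ^ 2 + lam * ‖γ + ∑ j ∈ A, w j • z j‖

def proxPoint (γ : E) (j : ι) : E :=
  -(proxStep lam (∑ j ∈ A, w j ^ 2) ‖γ‖ * w j * ‖γ‖⁻¹) • γ

variable {A w lam}

lemma proxStep_nonneg {W N : ℝ} (hlam : 0 ≤ lam) (hW : 0 ≤ W) (hN : 0 ≤ N) :
    0 ≤ proxStep lam W N :=
  le_min hlam (div_nonneg hN hW)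

lemma proxStep_mul_le {W : ℝ} (N : ℝ) (hW : 0 < W) : proxStep lam W N * W ≤ N :=
  (le_div_iff₀ hW).1 (min_le_right _ _)

lemma norm_sum_smul_sq_le (z : ι → E) :
    ‖∑ j ∈ A, w j • z j‖ ^ 2 ≤ (∑ j ∈ A, w j ^ 2) * ∑ j ∈ A, ‖z j‖ ^ 2 := by
  have hnorm : ‖∑ j ∈ A, w j • z j‖ ≤ ∑ j ∈ A, |w j| * ‖z j‖ :=
    (norm_sum_le _ _).trans_eq (Finset.sum_congr rfl fun j _ => by rw [norm_smul, Real.norm_eq_abs])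
  calc ‖∑ j ∈ A, w j • z j‖ ^ 2 ≤ (∑ j ∈ A, |w j| * ‖z j‖) ^ 2 :=
        pow_le_pow_left₀ (norm_nonneg _) hnorm 2
    _ ≤ (∑ j ∈ A, |w j| ^ 2) * ∑ j ∈ A, ‖z j‖ ^ 2 := Finset.sum_mul_sq_le_sq_mul_sq _ _ _
    _ = (∑ j ∈ A, w j ^ 2) * ∑ j ∈ A, ‖z j‖ ^ 2 := by simp_rw [sq_abs]

/-- Weak duality with the multiplier `m = proxStep`: by Cauchy–Schwarz and AM–GM
`m ‖u‖ ≤ ½ ∑ ‖zⱼ‖² + ½ m² W` for `u = ∑ wⱼ zⱼ`, and `m (‖γ‖ - ‖u‖) ≤ λ ‖γ + u‖` as `m ≤ λ`. -/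
lemma proxValue_le_proxEnergy (hlam : 0 ≤ lam) (hW : 0 < ∑ j ∈ A, w j ^ 2) (γ : E)
    (z : ι → E) : proxValue lam (∑ j ∈ A, w j ^ 2) ‖γ‖ ≤ proxEnergy A w lam γ z := by
  set W := ∑ j ∈ A, w j ^ 2
  set S := ∑ j ∈ A, ‖z j‖ ^ 2
  set u := ∑ j ∈ A, w j • z j
  set μ := proxStep lam W ‖γ‖
  have hμ0 : 0 ≤ μ := proxStep_nonneg hlam hW.le (norm_nonneg γ)
  have hμlam : μ ≤ lam := min_le_left _ _
  have hcs : ‖u‖ ^ 2 ≤ W * S := norm_sum_smul_sq_le z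
  have hamgm : μ * ‖u‖ ≤ S / 2 + μ ^ 2 * W / 2 := by
    nlinarith [sq_nonneg (μ * W - ‖u‖), norm_nonneg u]
  have htri : μ * (‖γ‖ - ‖u‖) ≤ lam * ‖γ + u‖ := by
    have h : ‖γ‖ - ‖u‖ ≤ ‖γ + u‖ := by
      simpa using norm_sub_norm_le γ (-u)
    rcases le_total ‖u‖ ‖γ‖ with hle | hle
    · calc μ * (‖γ‖ - ‖u‖) ≤ lam * (‖γ‖ - ‖u‖) := by gcongr
        _ ≤ lam * ‖γ + u‖ := by gcongr
    · exact (mul_nonpos_of_nonneg_of_nonpos hμ0 (by linarith)).trans (by positivity)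
  rw [proxValue, proxEnergy]
  linarith

/-- With `mᵢ = proxStep lam W Nᵢ`,
`V(N₂) - V(N₁) = (m₂ - m₁)(N₂ - (m₁ + m₂) W / 2) + m₁ (N₂ - N₁)`. -/
lemma proxValue_strictMonoOn {W : ℝ} (hlam : 0 < lam) (hW : 0 < W) :
    StrictMonoOn (proxValue lam W) (Set.Ici 0) := by
  intro N₁ hN₁ N₂ _ hlt
  have hN₁ : 0 ≤ N₁ := hN₁
  have hμ₁ := proxStep_nonneg hlam.le hW.le hN₁
  have hμ₂ : 0 < proxStep lam W N₂ := lt_min hlam (div_pos (hN₁.trans_lt hlt) hW)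
  have hμ₁₂ : proxStep lam W N₁ ≤ proxStep lam W N₂ := min_le_min le_rfl (by gcongr)
  have hμ₁W := proxStep_mul_le (lam := lam) N₁ hW
  have hμ₂W := proxStep_mul_le (lam := lam) N₂ hW
  unfold proxValue
  rcases hN₁.eq_or_lt with rfl | hN₁
  · have : proxStep lam W 0 = 0 := by simp [proxStep, hlam.le]
    rw [this]
    nlinarith
  · have hμ₁ : 0 < proxStep lam W N₁ := lt_min hlam (div_pos hN₁ hW)
    nlinarith [mul_nonneg (sub_nonneg.2 hμ₁₂) (sub_nonneg.2 hμ₂W), mul_pos hμ₁ (sub_pos.2 hlt)]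

lemma proxEnergy_proxPoint (hlam : 0 ≤ lam) (hW : 0 < ∑ j ∈ A, w j ^ 2) (γ : E) :
    proxEnergy A w lam γ (proxPoint A w lam γ) = proxValue lam (∑ j ∈ A, w j ^ 2) ‖γ‖ := by
  set W := ∑ j ∈ A, w j ^ 2
  set μ := proxStep lam W ‖γ‖
  rcases eq_or_ne γ 0 with rfl | hγ
  · simp [proxEnergy, proxPoint, proxValue, proxStep, hlam]
  have hN : 0 < ‖γ‖ := norm_pos_iff.2 hγ
  have hsq : ∑ j ∈ A, ‖proxPoint A w lam γ j‖ ^ 2 = μ ^ 2 * W := by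
    have hpt (j : ι) : ‖proxPoint A w lam γ j‖ = |μ * w j| := by
      rw [proxPoint, norm_smul, norm_neg, Real.norm_eq_abs, abs_mul (μ * w j), abs_inv, abs_norm,
        inv_mul_cancel_right₀ hN.ne']
    simp_rw [hpt, sq_abs, mul_pow, ← Finset.mul_sum]
    rfl
  have hsum : γ + ∑ j ∈ A, w j • proxPoint A w lam γ j = (1 - μ * W / ‖γ‖) • γ := by
    have hterm (j : ι) : w j • proxPoint A w lam γ j = (-(μ * ‖γ‖⁻¹) * w j ^ 2) • γ := by
      rw [proxPoint, smul_smul]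
      congr 1
      ring
    simp_rw [hterm, ← Finset.sum_smul, ← Finset.mul_sum]
    module
  have hμW : μ * W ≤ ‖γ‖ := proxStep_mul_le _ hW
  have hcompl : (lam - μ) * (‖γ‖ - μ * W) = 0 := by
    rcases min_choice lam (‖γ‖ / W) with h | h
    · simp [μ, proxStep, h]
    · rw [show μ = ‖γ‖ / W from h]
      field_simp
      ring
  rw [proxEnergy, hsq, hsum, norm_smul, Real.norm_eq_abs,
    abs_of_nonneg (sub_nonneg.2 ((div_le_one hN).2 hμW)), proxValue]
  field_simp
  linear_combination 2 * hcompl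

lemma proxEnergy_midpoint_add_le (hlam : 0 ≤ lam) (γ : E) (z z' : ι → E) :
    proxEnergy A w lam γ (fun j => (2 : ℝ)⁻¹ • (z j + z' j)) + 1 / 8 * ∑ j ∈ A, ‖z j - z' j‖ ^ 2
      ≤ (proxEnergy A w lam γ z + proxEnergy A w lam γ z') / 2 := by
  have hsq (j : ι) : ‖(2 : ℝ)⁻¹ • (z j + z' j)‖ ^ 2
      = ‖z j‖ ^ 2 / 2 + ‖z' j‖ ^ 2 / 2 - ‖z j - z' j‖ ^ 2 / 4 := by
    rw [norm_smul, mul_pow, norm_inv, Real.norm_two]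
    linarith [parallelogram_law_with_norm ℝ (z j) (z' j)]
  have hmid : γ + ∑ j ∈ A, w j • (2 : ℝ)⁻¹ • (z j + z' j)
      = (2 : ℝ)⁻¹ • ((γ + ∑ j ∈ A, w j • z j) + (γ + ∑ j ∈ A, w j • z' j)) := by
    simp_rw [smul_comm (w _) (2 : ℝ)⁻¹, ← Finset.smul_sum, smul_add, Finset.sum_add_distrib]
    module
  have hnorm : ‖γ + ∑ j ∈ A, w j • (2 : ℝ)⁻¹ • (z j + z' j)‖
      ≤ (‖γ + ∑ j ∈ A, w j • z j‖ + ‖γ + ∑ j ∈ A, w j • z' j‖) / 2 := by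
    rw [hmid, norm_smul, norm_inv, Real.norm_two, inv_mul_eq_div]
    exact div_le_div_of_nonneg_right (norm_add_le _ _) zero_le_two
  simp only [proxEnergy, hsq, Finset.sum_sub_distrib, Finset.sum_add_distrib, ← Finset.sum_div]
  nlinarith [mul_le_mul_of_nonneg_left hnorm hlam]

/-- Strong convexity: compare the energy at the midpoint of `z` and the minimiser with the
lower bound `proxValue`. -/
lemma proxValue_add_le_proxEnergy (hlam : 0 ≤ lam) (hW : 0 < ∑ j ∈ A, w j ^ 2) (γ : E)
    (z : ι → E) :
    proxValue lam (∑ j ∈ A, w j ^ 2) ‖γ‖ + 1 / 4 * ∑ j ∈ A, ‖z j - proxPoint A w lam γ j‖ ^ 2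
      ≤ proxEnergy A w lam γ z := by
  have hmid := proxEnergy_midpoint_add_le (A := A) (w := w) hlam γ z (proxPoint A w lam γ)
  have hlow := proxValue_le_proxEnergy hlam hW γ fun j => (2 : ℝ)⁻¹ • (z j + proxPoint A w lam γ j)
  rw [proxEnergy_proxPoint hlam hW] at hmid
  linarith

lemma proxEnergy_congr {γ : E} {z z' : ι → E} (h : ∀ j ∈ A, z j = z' j) :
    proxEnergy A w lam γ z = proxEnergy A w lam γ z' := by
  simp +contextual only [proxEnergy, h]

lemma abs_proxStep_mul_mul_inv_le {W N a : ℝ} (hlam : 0 ≤ lam) (hW : 0 < W) (hN : 0 ≤ N)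
    (ha : |a| ≤ W) : |proxStep lam W N * a * N⁻¹| ≤ 1 := by
  rcases hN.eq_or_lt with rfl | hN
  · simp
  rw [abs_mul, abs_mul, abs_of_nonneg (proxStep_nonneg hlam hW.le hN.le), abs_inv,
    abs_of_pos hN, ← div_eq_mul_inv, div_le_one hN]
  calc proxStep lam W N * |a| ≤ proxStep lam W N * W := by
        gcongr; exact proxStep_nonneg hlam hW.le hN.le
    _ ≤ N := proxStep_mul_le N hW

end Prox

section Problem

variable {m n d : ℕ} (w : Fin d → ℝ) (A : Finset (Fin d)) (lam : ℝ) (f : Fin d → Pt m n)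

def proxObjective (x : Fin d → Pt m n) : ℝ :=
  1 / 2 * ∑ j ∈ A, dX (x j) (f j) ^ 2 + lam * Dw d w x

def proxSolution (j : Fin d) : Pt m n :=
  if j ∈ A then
    wrapPt (f j + ptEquivEuclidean.symm
      (proxPoint A w lam (ptEquivEuclidean (wrappedDiff w f)) j))
  else f j

variable {w A lam f}

lemma proxSolution_of_notMem {j : Fin d} (hj : j ∉ A) : proxSolution w A lam f j = f j :=
  if_neg hj

lemma proxSolution_of_mem {j : Fin d} (hj : j ∈ A) :
    proxSolution w A lam f j = wrapPt (f j - (proxStep lam (∑ j ∈ A, w j ^ 2)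
      ‖ptEquivEuclidean (wrappedDiff w f)‖ * w j) •
        ‖ptEquivEuclidean (wrappedDiff w f)‖⁻¹ • wrappedDiff w f) := by
  rw [proxSolution, if_pos hj, proxPoint, map_smul, LinearEquiv.symm_apply_apply, smul_smul,
    neg_smul, ← sub_eq_add_neg]

lemma proxSolution_mem_Ico (hf : ∀ j i, (f j).1 i ∈ Set.Ico (-π) π) (j : Fin d) (i : Fin m) :
    (proxSolution w A lam f j).1 i ∈ Set.Ico (-π) π := by
  unfold proxSolution
  split_ifs
  · exact wrap_mem_Ico _
  · exact hf j i

/-- Since `m |wⱼ| ≤ m ‖w^a‖² ≤ ‖γ‖`, each displacement `-m wⱼ γ / ‖γ‖` stays in `(-π, π)^m`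
and is therefore not changed by the wrap. -/
lemma ptEquivEuclidean_wrapPt_proxSolution_sub (hlam : 0 ≤ lam)
    (hW : 0 < ∑ j ∈ A, w j ^ 2) (hwA : ∀ j ∈ A, |w j| ≤ ∑ j ∈ A, w j ^ 2)
    (hγ : ∀ i, |(wrappedDiff w f).1 i| < π) {j : Fin d} (hj : j ∈ A) :
    ptEquivEuclidean (wrapPt (proxSolution w A lam f j - f j))
      = proxPoint A w lam (ptEquivEuclidean (wrappedDiff w f)) j := by
  rw [proxSolution, if_pos hj, wrapPt_wrapPt_add_sub, LinearEquiv.apply_symm_apply]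
  intro i
  have hc := abs_proxStep_mul_mul_inv_le hlam hW
    (norm_nonneg (ptEquivEuclidean (wrappedDiff w f))) (hwA j hj)
  simp only [proxPoint, map_smul, LinearEquiv.symm_apply_apply, Prod.smul_fst, Pi.smul_apply,
    smul_eq_mul]
  rw [abs_mul, abs_neg]
  calc _ ≤ 1 * |(wrappedDiff w f).1 i| := by gcongr
    _ < π := by rw [one_mul]; exact hγ i

lemma proxObjective_le_proxEnergy (hlam : 0 ≤ lam) (hwint : ∀ j, ∃ z : ℤ, (z : ℝ) = w j)
    (hunit : ∃ c : Fin d → ℤ, ∑ j, (c j : ℝ) * w j = 1) {x : Fin d → Pt m n}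
    (hx : ∀ j ∉ A, x j = f j) :
    proxObjective w A lam f x ≤ proxEnergy A w lam (ptEquivEuclidean (wrappedDiff w f))
      (fun j => ptEquivEuclidean (wrapPt (x j - f j))) := by
  rw [proxObjective, proxEnergy, Dw_eq_norm_wrapPt_add hwint hunit hx]
  simp_rw [dX_eq_norm_wrapPt, ← map_smul, ← map_sum, ← map_add]
  gcongr
  exact norm_ptEquivEuclidean_wrapPt_le _

lemma exists_proxObjective_eq_proxEnergy (hwint : ∀ j, ∃ z : ℤ, (z : ℝ) = w j)
    (hunit : ∃ c : Fin d → ℤ, ∑ j, (c j : ℝ) * w j = 1) {x : Fin d → Pt m n}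
    (hx : ∀ j ∉ A, x j = f j) :
    ∃ ℓ ∈ cycLattice m n, proxObjective w A lam f x
      = proxEnergy A w lam (ptEquivEuclidean (wrappedDiff w f + ℓ))
          (fun j => ptEquivEuclidean (wrapPt (x j - f j))) := by
  set p := wrappedDiff w f + ∑ j ∈ A, w j • wrapPt (x j - f j)
  refine ⟨wrapPt p - p, wrapPt_sub_self_mem p, ?_⟩
  rw [proxObjective, proxEnergy, Dw_eq_norm_wrapPt_add hwint hunit hx]
  simp_rw [dX_eq_norm_wrapPt, ← map_smul, ← map_sum, ← map_add]
  congr 4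
  simp only [p]
  abel

theorem proxObjective_proxSolution_lt (hlam : 0 < lam)
    (hwint : ∀ j, ∃ z : ℤ, (z : ℝ) = w j) (hunit : ∃ c : Fin d → ℤ, ∑ j, (c j : ℝ) * w j = 1)
    (hW : 0 < ∑ j ∈ A, w j ^ 2) (hf : ∀ j i, (f j).1 i ∈ Set.Ico (-π) π)
    (hγ : ∀ i, |(wrappedDiff w f).1 i| < π) {x : Fin d → Pt m n}
    (hx : ∀ j ∉ A, x j = f j) (hxI : ∀ j i, (x j).1 i ∈ Set.Ico (-π) π)
    (hne : x ≠ proxSolution w A lam f) :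
    proxObjective w A lam f (proxSolution w A lam f) < proxObjective w A lam f x := by
  set γ := ptEquivEuclidean (wrappedDiff w f)
  set W := ∑ j ∈ A, w j ^ 2
  set z := fun j => ptEquivEuclidean (wrapPt (x j - f j))
  set zh := proxPoint A w lam γ
  have hwA (j : Fin d) (hj : j ∈ A) : |w j| ≤ W :=
    (abs_le_sq_of_exists_int (hwint j)).trans
      (Finset.single_le_sum (fun j _ => sq_nonneg (w j)) hj)
  have hsol (j : Fin d) (hj : j ∈ A) :
      ptEquivEuclidean (wrapPt (proxSolution w A lam f j - f j)) = zh j :=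
    ptEquivEuclidean_wrapPt_proxSolution_sub hlam.le hW hwA hγ hj
  have hsol_le : proxObjective w A lam f (proxSolution w A lam f) ≤ proxValue lam W ‖γ‖ :=
    calc _ ≤ _ := proxObjective_le_proxEnergy hlam.le hwint hunit fun j hj =>
          proxSolution_of_notMem hj
      _ = proxValue lam W ‖γ‖ := by rw [proxEnergy_congr hsol, proxEnergy_proxPoint hlam.le hW]
  obtain ⟨ℓ, hℓ, hobj⟩ := exists_proxObjective_eq_proxEnergy (lam := lam) hwint hunit hx
  rw [hobj]
  refine hsol_le.trans_lt ?_
  rcases eq_or_ne ℓ 0 with rfl | hℓ0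
  · obtain ⟨j, hj, hzj⟩ : ∃ j ∈ A, z j ≠ zh j := by
      by_contra! h
      refine hne (funext fun j => ?_)
      by_cases hj : j ∈ A
      · exact eq_of_wrapPt_sub_eq (hxI j) (proxSolution_mem_Ico hf j)
          (ptEquivEuclidean.injective ((h j hj).trans (hsol j hj).symm))
      · rw [hx j hj, proxSolution_of_notMem hj]
    have hpos : 0 < ∑ j ∈ A, ‖z j - zh j‖ ^ 2 :=
      Finset.sum_pos' (fun j _ => by positivity)
        ⟨j, hj, pow_pos (norm_pos_iff.2 (sub_ne_zero.2 hzj)) 2⟩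
    have hgrowth := proxValue_add_le_proxEnergy hlam.le hW γ z
    rw [add_zero]
    linarith
  · calc proxValue lam W ‖γ‖ < proxValue lam W ‖ptEquivEuclidean (wrappedDiff w f + ℓ)‖ :=
          proxValue_strictMonoOn hlam hW (norm_nonneg _) (norm_nonneg _)
            (norm_ptEquivEuclidean_lt_add hγ hℓ hℓ0)
      _ ≤ _ := proxValue_le_proxEnergy hlam.le hW _ _

end Problem
section Weights

variable {d : ℕ} {w : Fin d → ℝ}

def IsDiffWeight (w : Fin d → ℝ) : Prop :=
  List.ofFn w = [(-1 : ℝ), 1] ∨ List.ofFn w = [(1 : ℝ), -2, 1]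
    ∨ List.ofFn w = [(-1 : ℝ), 1, 1, -1]

lemma IsDiffWeight.eq_neg_one_or_one_or_neg_two (hw : IsDiffWeight w) (j : Fin d) :
    w j = -1 ∨ w j = 1 ∨ w j = -2 := by
  have hmem : w j ∈ List.ofFn w := List.mem_ofFn.2 ⟨j, rfl⟩
  rcases hw with h | h | h <;> rw [h] at hmem <;> simp at hmem <;> tauto

lemma IsDiffWeight.exists_int_eq (hw : IsDiffWeight w) (j : Fin d) : ∃ z : ℤ, (z : ℝ) = w j := by
  rcases hw.eq_neg_one_or_one_or_neg_two j with h | h | h <;> rw [h]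
  exacts [⟨-1, by simp⟩, ⟨1, by simp⟩, ⟨-2, by simp⟩]

lemma IsDiffWeight.exists_int_sum_mul_eq_one (hw : IsDiffWeight w) :
    ∃ c : Fin d → ℤ, ∑ j, (c j : ℝ) * w j = 1 := by
  have hmem : (1 : ℝ) ∈ List.ofFn w := by rcases hw with h | h | h <;> simp [h]
  obtain ⟨j₀, hj₀⟩ := List.mem_ofFn.1 hmem
  exact ⟨Pi.single j₀ 1, by simp [Pi.single_apply, hj₀]⟩

lemma IsDiffWeight.sum_sq_pos (hw : IsDiffWeight w) {A : Finset (Fin d)} (hA : A.Nonempty) :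
    0 < ∑ j ∈ A, w j ^ 2 :=
  Finset.sum_pos (fun j _ => by
    rcases hw.eq_neg_one_or_one_or_neg_two j with h | h | h <;> rw [h] <;> norm_num) hA

end Weights

/-- **Theorem 3.3 (proximal mappings with fixed components, generic case).**
For a weight `w ∈ {(-1,1), (1,-2,1), (-1,1,1,-1)}`, a nonempty active set `A`, data
`f ∈ 𝒳^d` and `λ > 0`, if no cyclic component of `f_S w` is an odd multiple of `π`, then the
functional `ℰ(x^a) = ½ Σ_{j∈A} d_𝒳(x^{(j)},f^{(j)})² + λ D(x;w)` (columns outside `A` fixed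
to `f`) has the unique minimizer `x̂^a = (f^a − m s (w^a)ᵀ)_𝒳`. -/
theorem prox_with_fixed_components_generic
    (m n d : ℕ) (w : Fin d → ℝ)
    (hw : List.ofFn w = [(-1 : ℝ), 1] ∨ List.ofFn w = [(1 : ℝ), -2, 1]
        ∨ List.ofFn w = [(-1 : ℝ), 1, 1, -1])
    (lam : ℝ) (hlam : 0 < lam)
    (A : Finset (Fin d)) (hA : A.Nonempty)
    (f : Fin d → Pt m n)
    (hf : ∀ j i, (f j).1 i ∈ Set.Ico (-Real.pi) Real.pi)
    (hgen : ∀ (i : Fin m) (z : ℤ),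
      (∑ j, (f j).1 i * w j) ≠ 2 * Real.pi * (z : ℝ) - Real.pi)
    (En : (Fin d → Pt m n) → ℝ)
    (hEn : ∀ x, En x = (1 / 2) * (∑ j ∈ A, dX (x j) (f j) ^ 2) + lam * Dw d w x)
    (Nv : ℝ)
    (hNv : Nv = Real.sqrt ((∑ i, (wrap (∑ j, (f j).1 i * w j)) ^ 2)
        + ∑ i, (∑ j, (f j).2 i * w j) ^ 2))
    (sS : Fin m → ℝ) (sR : Fin n → ℝ)
    (hsS : sS = if Nv = 0 then 0 else fun i => wrap (∑ j, (f j).1 i * w j) / Nv)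
    (hsR : sR = if Nv = 0 then 0 else fun i => (∑ j, (f j).2 i * w j) / Nv)
    (mv : ℝ) (hmv : mv = min lam (Nv / ∑ j ∈ A, (w j) ^ 2))
    (xhat : Fin d → Pt m n)
    (hxhat : ∀ j, xhat j = if j ∈ A then
        ((fun i => wrap ((f j).1 i - mv * sS i * w j)),
         (fun i => (f j).2 i - mv * sR i * w j))
      else f j) :
    ((∀ j ∉ A, xhat j = f j) ∧
      (∀ j i, (xhat j).1 i ∈ Set.Ico (-Real.pi) Real.pi)) ∧
    (∀ x : Fin d → Pt m n,
      (∀ j ∉ A, x j = f j) →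
      (∀ j i, (x j).1 i ∈ Set.Ico (-Real.pi) Real.pi) →
      x ≠ xhat → En xhat < En x) := by
  have hγ (i : Fin m) : |(wrappedDiff w f).1 i| < π := by
    rw [wrappedDiff_fst_apply]
    exact abs_wrap_lt (hgen i)
  have hNv' : Nv = ‖ptEquivEuclidean (wrappedDiff w f)‖ := by
    simp only [hNv, norm_ptEquivEuclidean, wrappedDiff_fst_apply, wrappedDiff_snd_apply]
  have hs : (sS, sR) = Nv⁻¹ • wrappedDiff w f := by
    rw [hsS, hsR]
    split_ifs with h <;> ext i <;>
      simp [wrappedDiff_fst_apply, wrappedDiff_snd_apply, h, div_eq_inv_mul]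
  have hxhat' : xhat = proxSolution w A lam f := by
    funext j
    by_cases hj : j ∈ A
    · rw [hxhat, if_pos hj, proxSolution_of_mem hj, ← hNv', ← hs]
      refine Prod.ext (funext fun i => congrArg wrap ?_) (funext fun i => ?_) <;>
        simp [wrapPt, hmv, proxStep] <;> ring
    · rw [hxhat, if_neg hj, proxSolution_of_notMem hj]
  have hEn' : En = proxObjective w A lam f := funext hEn
  subst hxhat' hEn'
  exact ⟨⟨fun j hj => proxSolution_of_notMem hj, proxSolution_mem_Ico hf⟩,
    fun x hx hxI hne => proxObjective_proxSolution_lt hlam (IsDiffWeight.exists_int_eq hw)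
      (IsDiffWeight.exists_int_sum_mul_eq_one hw) (IsDiffWeight.sum_sq_pos hw hA) hf hγ
      hx hxI hne⟩
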